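/- arXiv:2101.08605 — 2 statements merged into one kernel-verified Lean document; each statement's English description precedes it below -/
import Mathlib

section
/- Let r > 0, let η_ero ∈ (0,1), and set h = 2r(1 − √(1 − η_ero)). Suppose the 1D design is the indicator of the interval [−L/2, L/2], so that material occupies a segment of length L ≥ h, with r ≥ (L+h)/2. If ∫_{(L−h)/2}^{(L+h)/2} (1/r)(1 − |x|/r) dx = η_i, then L = r(2 − η_i/(1 − √(1 − η_ero))). -/
/-- Under the robustness condition fixing `h = 2r(1 - √(1 - η_ero))`, if the member length
`L` satisfies `L ≥ h` and `r ≥ (L + h)/2`, and the filtered density at the offset point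
equals `η_i`, i.e. `∫_{(L-h)/2}^{(L+h)/2} (1/r)(1 - |x|/r) dx = η_i`, then
`L = r (2 - η_i / (1 - √(1 - η_ero)))`. -/
theorem member_length_formula (r ηero ηi h L : ℝ) (hr : 0 < r)
    (hηe0 : 0 < ηero) (hηe1 : ηero < 1)
    (hh : h = 2 * r * (1 - Real.sqrt (1 - ηero)))
    (hLh : L ≥ h) (hrL : r ≥ (L + h) / 2)
    (hint : ∫ x in ((L - h) / 2)..((L + h) / 2), (1 / r) * (1 - |x| / r) = ηi) :
    L = r * (2 - ηi / (1 - Real.sqrt (1 - ηero))) := by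
  set s := Real.sqrt (1 - ηero) with hs
  have hs1 : s < 1 := by
    have : (1 : ℝ) - ηero < 1 := by linarith
    calc s < Real.sqrt 1 := by
            apply Real.sqrt_lt_sqrt (by linarith) this
         _ = 1 := Real.sqrt_one
  have hspos : 0 ≤ s := Real.sqrt_nonneg _
  have hhpos : 0 < h := by
    rw [hh]; have : 0 < 1 - s := by linarith
    positivity
  have ha0 : 0 ≤ (L - h) / 2 := by linarith
  -- abs = id on the interval
  have habs : ∫ x in ((L - h) / 2)..((L + h) / 2), (1 / r) * (1 - |x| / r)
      = ∫ x in ((L - h) / 2)..((L + h) / 2), (1 / r) * (1 - x / r) := by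
    apply intervalIntegral.integral_congr
    intro x hx
    rw [Set.uIcc_of_le (by linarith)] at hx
    have : 0 ≤ x := le_trans ha0 hx.1
    simp only [abs_of_nonneg this]
  have hval : ∫ x in ((L - h) / 2)..((L + h) / 2), (1 / r) * (1 - x / r)
      = (1 / r) * (h - L * h / (2 * r)) := by
    have h1 : ∀ x : ℝ, (1 / r) * (1 - x / r) = 1 / r - (1 / r ^ 2) * x := by
      intro x; field_simp
    simp only [h1]
    rw [intervalIntegral.integral_sub intervalIntegrable_const
        ((by fun_prop : Continuous fun x : ℝ => 1 / r ^ 2 * x).intervalIntegrable _ _),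
      intervalIntegral.integral_const_mul, integral_id,
      intervalIntegral.integral_const]
    field_simp
    have hrr : r ^ 2 * r⁻¹ = r := by field_simp
    linear_combination (8 * h) * hrr
  rw [habs, hval] at hint
  have hne : (1 : ℝ) - s ≠ 0 := by linarith
  rw [hh] at hint
  field_simp at hint ⊢
  nlinarith [hint, sq_nonneg r, hr]
end

section
/- Let r > 0, 0 < h ≤ 2r, and η ∈ (0, F(h)) where F(h) = (h/r)(1 − h/(4r)) is the maximum of the filtered field of a solid segment of length h. Then there exists a unique y* > 0 with ρ̃(y*) = η, and the projected set {y : ρ̃(y) ≥ η} is the interval [−y*, y*]. -/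
/-!
Writing `K` for a primitive of the even tent kernel, `ρ̃(y) = K(y + h/2) - K(y - h/2)`. Hence `ρ̃`
is even and continuous, vanishes for `y ≥ r + h/2`, and on `(0, r + h/2)` its derivative
`tent(y + h/2) - tent(y - h/2)` is negative, because `|y - h/2| < |y + h/2|` and `h ≤ 2r` keeps
`y - h/2` inside the support of the kernel. So `ρ̃` falls strictly from `ρ̃(0) = F(h)` to `0` on
`[0, r + h/2]`: the intermediate value theorem gives `y*`, and `η ≤ ρ̃(y) = ρ̃(|y|)` holds exactly
when `|y| ≤ y*`.
-/

open Set intervalIntegral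

section StrictAntiOnIcc

variable {f : ℝ → ℝ} {R : ℝ}

theorem le_iff_of_strictAntiOn_Icc (hanti : StrictAntiOn f (Icc 0 R))
    (hout : ∀ y, R ≤ y → f y ≤ 0) {a b : ℝ} (ha : 0 ≤ a) (hb : 0 ≤ b) (hfa : 0 < f a) :
    f a ≤ f b ↔ b ≤ a := by
  have haR : a < R := lt_of_not_ge fun h => (hout a h).not_gt hfa
  rcases lt_or_ge b R with hbR | hbR
  · exact hanti.le_iff_ge ⟨ha, haR.le⟩ ⟨hb, hbR.le⟩
  · exact iff_of_false ((hout b hbR).trans_lt hfa).not_ge (by linarith)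

theorem existsUnique_pos_eq_of_strictAntiOn_Icc (hf : Continuous f)
    (hanti : StrictAntiOn f (Icc 0 R)) (hout : ∀ y, R ≤ y → f y ≤ 0) {η : ℝ} (hη : 0 < η)
    (hηf : η < f 0) : ∃! y, 0 < y ∧ f y = η := by
  have hR : 0 ≤ R := le_of_not_gt fun h => (hout 0 h.le).not_gt (hη.trans hηf)
  obtain ⟨y, hy, hyη⟩ := intermediate_value_Icc' hR hf.continuousOn
    ⟨(hout R le_rfl).trans hη.le, hηf.le⟩
  have hy0 : 0 ≠ y := by rintro rfl; exact hηf.ne' hyη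
  refine ⟨y, ⟨lt_of_le_of_ne hy.1 hy0, hyη⟩, fun z ⟨hz, hzη⟩ => le_antisymm ?_ ?_⟩
  · exact (le_iff_of_strictAntiOn_Icc hanti hout hy.1 hz.le (hyη ▸ hη)).1 (hyη.trans hzη.symm).le
  · exact (le_iff_of_strictAntiOn_Icc hanti hout hz.le hy.1 (hzη ▸ hη)).1 (hzη.trans hyη.symm).le

theorem setOf_le_eq_Icc_of_even_of_strictAntiOn_Icc (heven : Function.Even f)
    (hanti : StrictAntiOn f (Icc 0 R)) (hout : ∀ y, R ≤ y → f y ≤ 0) {y₀ : ℝ} (hy₀ : 0 ≤ y₀)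
    (hfy₀ : 0 < f y₀) : {y | f y₀ ≤ f y} = Icc (-y₀) y₀ := by
  ext y
  have habs : f |y| = f y := abs_by_cases (fun t => f t = f y) rfl (heven y)
  rw [mem_ofPred_eq, ← habs, le_iff_of_strictAntiOn_Icc hanti hout hy₀ (abs_nonneg y) hfy₀,
    mem_Icc, abs_le]

end StrictAntiOnIcc

noncomputable def tent (r t : ℝ) : ℝ := 1 / r * max 0 (1 - |t| / r)

theorem continuous_tent (r : ℝ) : Continuous (tent r) := by
  unfold tent; fun_prop

theorem tent_neg (r t : ℝ) : tent r (-t) = tent r t := by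
  simp only [tent, abs_neg]

theorem tent_of_abs_le {r : ℝ} (hr : 0 < r) {t : ℝ} (ht : |t| ≤ r) :
    tent r t = 1 / r * (1 - |t| / r) := by
  rw [tent, max_eq_right (sub_nonneg.2 ((div_le_one hr).2 ht))]

theorem tent_of_le_abs {r : ℝ} (hr : 0 < r) {t : ℝ} (ht : r ≤ |t|) : tent r t = 0 := by
  rw [tent, max_eq_left (sub_nonpos.2 ((le_div_iff₀ hr).2 (by linarith))), mul_zero]

theorem tent_lt_tent_of_abs_lt {r : ℝ} (hr : 0 < r) {s t : ℝ} (hs : |s| < r) (hst : |s| < |t|) :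
    tent r t < tent r s := by
  rw [tent_of_abs_le hr hs.le, tent]
  gcongr
  refine max_lt (sub_pos.2 ((div_lt_one hr).2 hs)) ?_
  gcongr

noncomputable def tentPrimitive (r t : ℝ) : ℝ := ∫ x in 0..t, tent r x

theorem hasDerivAt_tentPrimitive (r t : ℝ) : HasDerivAt (tentPrimitive r) (tent r t) t :=
  ((continuous_tent r).integral_hasStrictDerivAt 0 t).hasDerivAt

theorem tentPrimitive_neg (r t : ℝ) : tentPrimitive r (-t) = -tentPrimitive r t := by
  have := integral_comp_neg (a := t) (b := 0) (tent r)
  rw [neg_zero] at this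
  rw [tentPrimitive, tentPrimitive, ← integral_symm, ← this]
  simp only [tent_neg]

theorem tentPrimitive_of_le {r : ℝ} (hr : 0 < r) {t : ℝ} (ht₀ : 0 ≤ t) (htr : t ≤ r) :
    tentPrimitive r t = t / r * (1 - t / (2 * r)) := by
  have : EqOn (tent r) (fun x => 1 / r * (1 - x / r)) (uIcc 0 t) := by
    intro x hx
    rw [uIcc_of_le ht₀] at hx
    rw [tent_of_abs_le hr (by rw [abs_of_nonneg hx.1]; linarith [hx.2]), abs_of_nonneg hx.1]
  rw [tentPrimitive, integral_congr this]
  simp only [integral_const_mul, integral_sub intervalIntegrable_const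
    (intervalIntegrable_id.div_const r), integral_const, integral_div, integral_id, smul_eq_mul]
  field_simp
  ring

noncomputable def segmentField (r h y : ℝ) : ℝ := ∫ x in (-(h / 2))..(h / 2), tent r (y - x)

theorem segmentField_eq_integral (r h y : ℝ) :
    segmentField r h y = ∫ x in (y - h / 2)..(y + h / 2), tent r x := by
  rw [segmentField, integral_comp_sub_left, sub_neg_eq_add]

theorem segmentField_eq_sub (r h y : ℝ) :
    segmentField r h y = tentPrimitive r (y + h / 2) - tentPrimitive r (y - h / 2) := by
  rw [segmentField_eq_integral, tentPrimitive, tentPrimitive,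
    integral_interval_sub_left ((continuous_tent r).intervalIntegrable _ _)
      ((continuous_tent r).intervalIntegrable _ _)]

theorem hasDerivAt_segmentField (r h y : ℝ) :
    HasDerivAt (segmentField r h) (tent r (y + h / 2) - tent r (y - h / 2)) y := by
  have := ((hasDerivAt_tentPrimitive r _).comp_add_const y (h / 2)).sub
    ((hasDerivAt_tentPrimitive r _).comp_sub_const y (h / 2))
  rwa [funext (segmentField_eq_sub r h)]

theorem continuous_segmentField (r h : ℝ) : Continuous (segmentField r h) :=
  continuous_iff_continuousAt.2 fun y => (hasDerivAt_segmentField r h y).continuousAt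

theorem even_segmentField (r h : ℝ) : Function.Even (segmentField r h) := by
  intro y
  rw [segmentField_eq_sub, segmentField_eq_sub, show -y + h / 2 = -(y - h / 2) by ring,
    show -y - h / 2 = -(y + h / 2) by ring, tentPrimitive_neg, tentPrimitive_neg]
  ring

theorem segmentField_zero {r h : ℝ} (hr : 0 < r) (h₀ : 0 ≤ h) (hh : h ≤ 2 * r) :
    segmentField r h 0 = h / r * (1 - h / (4 * r)) := by
  rw [segmentField_eq_sub, zero_add, zero_sub, tentPrimitive_neg,
    tentPrimitive_of_le hr (by linarith) (by linarith)]
  field_simp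
  ring

theorem segmentField_of_le {r h : ℝ} (hr : 0 < r) (h₀ : 0 ≤ h) {y : ℝ} (hy : r + h / 2 ≤ y) :
    segmentField r h y = 0 := by
  rw [segmentField_eq_integral]
  refine (integral_congr fun x hx => ?_).trans integral_zero
  rw [uIcc_of_le (by linarith)] at hx
  exact tent_of_le_abs hr (le_abs.2 (Or.inl (by linarith [hx.1])))

theorem strictAntiOn_segmentField {r h : ℝ} (hr : 0 < r) (h₀ : 0 < h) (hh : h ≤ 2 * r) :
    StrictAntiOn (segmentField r h) (Icc 0 (r + h / 2)) := by
  refine strictAntiOn_of_deriv_neg (convex_Icc _ _) (continuous_segmentField r h).continuousOn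
    fun y hy => ?_
  rw [interior_Icc] at hy
  rw [(hasDerivAt_segmentField r h y).deriv, sub_neg]
  refine tent_lt_tent_of_abs_lt hr (abs_lt.2 ⟨by linarith [hy.1], by linarith [hy.2]⟩) ?_
  rw [abs_lt, abs_of_pos (by linarith [hy.1])]
  constructor <;> linarith [hy.1]

/-- For a solid segment of length `h ∈ (0, 2r]` with filtered field
`ρ̃(y) = ∫_{-h/2}^{h/2} (1/r) max(0, 1 - |y - x|/r) dx` and a threshold
`η ∈ (0, F(h))` where `F(h) = (h/r)(1 - h/(4r))` is the peak value `ρ̃(0)`,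
there is a unique `y* > 0` with `ρ̃(y*) = η`, and for this `y*` the projected
superlevel set `{y : ρ̃(y) ≥ η}` is exactly the interval `[-y*, y*]`. -/
theorem projected_superlevel_is_interval (r h η : ℝ) (hr : 0 < r)
    (hh0 : 0 < h) (hh : h ≤ 2 * r)
    (hη0 : 0 < η) (hη1 : η < (h / r) * (1 - h / (4 * r)))
    (ρ : ℝ → ℝ)
    (hρ : ∀ y, ρ y = ∫ x in (-(h / 2))..(h / 2), (1 / r) * max 0 (1 - |y - x| / r)) :
    (∃! ystar : ℝ, 0 < ystar ∧ ρ ystar = η) ∧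
      ∀ ystar : ℝ, 0 < ystar → ρ ystar = η →
        {y : ℝ | η ≤ ρ y} = Set.Icc (-ystar) ystar := by
  obtain rfl : ρ = segmentField r h := funext hρ
  have hanti := strictAntiOn_segmentField hr hh0 hh
  have hout (y : ℝ) (hy : r + h / 2 ≤ y) : segmentField r h y ≤ 0 :=
    (segmentField_of_le hr hh0.le hy).le
  refine ⟨existsUnique_pos_eq_of_strictAntiOn_Icc (continuous_segmentField r h) hanti hout hη0
    (segmentField_zero hr hh0.le hh ▸ hη1), fun ystar hpos hystar => ?_⟩
  subst hystar
  exact setOf_le_eq_Icc_of_even_of_strictAntiOn_Icc (even_segmentField r h) hanti hout hpos.le hη0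
end
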